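/- Let h be a positive integer and 0 < β < 1. There exists α > 0 depending only on h and β such that for every graph G on n vertices with p = 2e(G)/n², for all i, j ∈ [h]: ∑_{S ∈ A_{i,j}} |N(S)| ≥ (1−β) n^{j+1} p^j, where A_{i,j} is the set of i-good sequences of length j relative to (α, β, h, 1). In particular there exists an i-good sequence S of length j with |N(S)| ≥ (1−β) p^j n. -/

import Mathlib

/-- The common neighborhood of a sequence of vertices. -/
def commNbhd {V : Type} (G : SimpleGraph V) {j : ℕ} (S : Fin j → V) : Set V :=
  {v | ∀ a : Fin j, G.Adj (S a) v}

/-- The `r`-norm density `p_r(G) := ((∑_v d(v)^r)/n^{r+1})^{1/r}`. -/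
noncomputable def rnormDensity {V : Type} [Fintype V] (G : SimpleGraph V)
    [DecidableRel G.Adj] (r : ℕ) : ℝ :=
  ((∑ v : V, (G.degree v : ℝ) ^ r) / (Fintype.card V : ℝ) ^ (r + 1)) ^ ((r : ℝ)⁻¹)

/-- `IsGood G α β p h i j S` : the length-`j` vertex sequence `S` is `i`-good relative
to `(α, β, h, r)` in `G`, where `p = p_r(G)`. A sequence `T` is `0`-good if
`|N(T)| ≥ α p^{|T|} n`; for `i ≥ 1`, `S` is `i`-good if it is `0`-good and for every
`|S| ≤ k ≤ h`, at least `(1-β)|N(S)|^k` of the length-`k` sequences in `N(S)` are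
`(i-1)`-good. -/
def IsGood {V : Type} [Fintype V] (G : SimpleGraph V) (α β p : ℝ) (h : ℕ) :
    ℕ → (j : ℕ) → (Fin j → V) → Prop
  | 0, j, S => α * p ^ j * (Fintype.card V : ℝ) ≤ (Nat.card (commNbhd G S) : ℝ)
  | i + 1, j, S =>
      (α * p ^ j * (Fintype.card V : ℝ) ≤ (Nat.card (commNbhd G S) : ℝ)) ∧
      ∀ k : ℕ, j ≤ k → k ≤ h →
        (1 - β) * (Nat.card (commNbhd G S) : ℝ) ^ k ≤
          (Nat.card {T : Fin k → V // (∀ a, T a ∈ commNbhd G S) ∧ IsGood G α β p h i k T} : ℝ)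

/-!
Write `c(S) = |N(S)|` and `X(ℓ, w) = n^ℓ (n p^ℓ)^w`. By induction on `i`, the length-`ℓ`
sequences that are not `i`-good satisfy `∑ c(S)^w ≤ δᵢ X(ℓ, w)` whenever `1 ≤ w ≤ ℓ ≤ h`, where
`δ_h = β`, `δᵢ = β εᵢ^h` with `εᵢ = δᵢ₊₁ / 2h`, and `α ≤ δ₀ / 2`.
A sequence fails to be `(i+1)`-good either because `c(S) < α p^ℓ n`, which contributes at most
`α^w X(ℓ, w)`, or because for some `k ∈ [ℓ, h]` more than `β c(S)^k` of the `k`-tuples in `N(S)`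
are not `i`-good. Since `T ⊆ N(S)` iff `S ⊆ N(T)`, counting these pairs from the side of `T`
and using the induction hypothesis with length and exponent swapped bounds the `k`-th moment of
such `S` by `εᵢ^h X(ℓ, k)`, and Hölder's inequality turns this into `εᵢ X(ℓ, w)` for the `w`-th
moment; summing over the at most `h` values of `k` gives `α + h εᵢ ≤ δᵢ₊₁`.
Finally `∑_S c(S) = ∑_v d(v)^j ≥ n^{j+1} p^j` by Jensen, and removing the sequences that are not
`i`-good (the case `w = 1`) leaves `(1 - β) n^{j+1} p^j`.
-/

open Finset

lemma forall_mem_commNbhd_comm {V : Type} (G : SimpleGraph V) {ℓ k : ℕ} (S : Fin ℓ → V)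
    (T : Fin k → V) : (∀ a, T a ∈ commNbhd G S) ↔ ∀ b, S b ∈ commNbhd G T :=
  ⟨fun hT b a => (hT a b).symm, fun hS a b => (hS b a).symm⟩

section Counting

open scoped Classical

variable {V : Type} [Fintype V] (G : SimpleGraph V)

lemma card_filter_forall_mem (s : Set V) (k : ℕ) :
    #{T : Fin k → V | ∀ a, T a ∈ s} = Nat.card s ^ k := by
  rw [← Fintype.card_subtype, ← Nat.card_eq_fintype_card,
    Nat.card_congr Equiv.subtypePiEquivPi, Nat.card_pi]
  simp

lemma sum_card_filter_forall_mem_commNbhd {ℓ k : ℕ} (P : (Fin k → V) → Prop) [DecidablePred P] :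
    ∑ S : Fin ℓ → V, #{T : Fin k → V | (∀ a, T a ∈ commNbhd G S) ∧ P T}
      = ∑ T : Fin k → V with P T, Nat.card (commNbhd G T) ^ ℓ := by
  simp_rw [card_filter]
  rw [sum_comm, sum_filter]
  refine sum_congr rfl fun T _ => ?_
  by_cases hT : P T
  · simp only [hT, and_true, if_true, forall_mem_commNbhd_comm G _ T]
    rw [← card_filter, card_filter_forall_mem]
  · simp [hT]

lemma sum_card_commNbhd (j : ℕ) :
    ∑ S : Fin j → V, Nat.card (commNbhd G S) = ∑ v, G.degree v ^ j := by
  simp_rw [Nat.card_eq_fintype_card, Fintype.card_subtype, card_filter]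
  rw [sum_comm]
  refine sum_congr rfl fun v _ => ?_
  rw [← card_filter, ← G.card_neighborSet_eq_degree, ← Nat.card_eq_fintype_card,
    ← card_filter_forall_mem]
  congr 1
  ext S
  simp only [mem_filter, mem_univ, true_and, SimpleGraph.mem_neighborSet]
  exact forall_congr' fun a => G.adj_comm _ _

lemma card_pow_mul_density_pow_le_sum_card_commNbhd {j : ℕ} (hj : 0 < j) :
    (Fintype.card V : ℝ) ^ (j + 1) * (2 * Nat.card G.edgeSet / (Fintype.card V : ℝ) ^ 2) ^ j
      ≤ ∑ S : Fin j → V, (Nat.card (commNbhd G S) : ℝ) := by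
  have hsum : ∑ S : Fin j → V, (Nat.card (commNbhd G S) : ℝ) = ∑ v, (G.degree v : ℝ) ^ j := by
    exact_mod_cast sum_card_commNbhd G j
  have hdeg : ∑ v, (G.degree v : ℝ) = 2 * Nat.card G.edgeSet := by
    rw [Nat.card_eq_fintype_card, ← SimpleGraph.edgeFinset_card]
    exact_mod_cast G.sum_degrees_eq_twice_card_edges
  obtain ⟨m, rfl⟩ : ∃ m, j = m + 1 := ⟨j - 1, by omega⟩
  have hjensen := pow_sum_div_card_le_sum_pow (s := univ) (f := fun v => (G.degree v : ℝ))
    (fun _ _ => Nat.cast_nonneg _) m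
  rw [card_univ, hdeg] at hjensen
  rw [hsum]
  rcases eq_or_ne (Fintype.card V : ℝ) 0 with hn | hn
  · rw [hn, zero_pow (Nat.succ_ne_zero _), zero_mul]
    positivity
  · refine le_trans (le_of_eq ?_) hjensen
    rw [div_pow, eq_div_iff (pow_ne_zero _ hn), ← pow_mul]
    field_simp
    ring

end Counting

lemma sum_pow_pow_le_card_pow_mul_sum_pow_pow {ι : Type*} (s : Finset ι) {f : ι → ℝ}
    (hf : ∀ i, 0 ≤ f i) {w k : ℕ} (hw : 0 < w) (hwk : w ≤ k) :
    (∑ i ∈ s, f i ^ w) ^ k ≤ (#s : ℝ) ^ (k - w) * (∑ i ∈ s, f i ^ k) ^ w := by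
  have hw' : (0 : ℝ) < w := by exact_mod_cast hw
  have hk' : (0 : ℝ) < k := by exact_mod_cast hw.trans_le hwk
  have hholder := Real.inner_le_weight_mul_Lp_of_nonneg s
    ((one_le_div hw').2 (by exact_mod_cast hwk : (w : ℝ) ≤ k)) (fun _ => 1) (fun i => f i ^ w)
    (fun _ => zero_le_one) (fun i => pow_nonneg (hf i) w)
  have hpow : ∀ i, (f i ^ w) ^ ((k : ℝ) / w) = f i ^ k := fun i => by
    rw [← Real.rpow_natCast (f i) w, ← Real.rpow_mul (hf i), mul_div_cancel₀ _ hw'.ne',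
      Real.rpow_natCast]
  simp only [one_mul, sum_const, nsmul_eq_mul, mul_one, hpow, inv_div] at hholder
  calc (∑ i ∈ s, f i ^ w) ^ k
      ≤ ((#s : ℝ) ^ (1 - (w : ℝ) / k) * (∑ i ∈ s, f i ^ k) ^ ((w : ℝ) / k)) ^ k :=
        pow_le_pow_left₀ (sum_nonneg fun i _ => pow_nonneg (hf i) w) hholder k
    _ = (#s : ℝ) ^ (k - w) * (∑ i ∈ s, f i ^ k) ^ w := by
      rw [mul_pow, ← Real.rpow_mul_natCast (by positivity),
        ← Real.rpow_mul_natCast (sum_nonneg fun i _ => pow_nonneg (hf i) k),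
        div_mul_cancel₀ _ hk'.ne', sub_mul, one_mul, div_mul_cancel₀ _ hk'.ne',
        ← Nat.cast_sub hwk, Real.rpow_natCast, Real.rpow_natCast]

lemma sum_pow_le_of_sum_pow_le {ι : Type*} {s : Finset ι} {f : ι → ℝ} (hf : ∀ i, 0 ≤ f i)
    {N M ε : ℝ} (hN : (#s : ℝ) ≤ N) (hM : 0 ≤ M) (hε : 0 ≤ ε) {w k : ℕ} (hw : 0 < w)
    (hwk : w ≤ k) (hk : ∑ i ∈ s, f i ^ k ≤ ε ^ k * N * M ^ k) :
    ∑ i ∈ s, f i ^ w ≤ ε ^ w * N * M ^ w := by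
  have hN0 : 0 ≤ N := (Nat.cast_nonneg _).trans hN
  refine (pow_le_pow_iff_left₀ (sum_nonneg fun i _ => pow_nonneg (hf i) w) (by positivity)
    (hw.trans_le hwk).ne').1 ?_
  obtain ⟨d, rfl⟩ := Nat.exists_eq_add_of_le hwk
  calc (∑ i ∈ s, f i ^ w) ^ (w + d)
      ≤ (#s : ℝ) ^ (w + d - w) * (∑ i ∈ s, f i ^ (w + d)) ^ w :=
        sum_pow_pow_le_card_pow_mul_sum_pow_pow s hf hw hwk
    _ ≤ N ^ d * (ε ^ (w + d) * N * M ^ (w + d)) ^ w := by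
        rw [Nat.add_sub_cancel_left]
        gcongr
        · exact pow_nonneg (sum_nonneg fun i _ => pow_nonneg (hf i) _) w
        · exact sum_nonneg fun i _ => pow_nonneg (hf i) _
    _ = (ε ^ w * N * M ^ w) ^ (w + d) := by ring

lemma sum_filter_le_sum_filter_add_sum_sum_filter {ι κ : Type*} (s : Finset ι) (t : Finset κ)
    {f : ι → ℝ} (hf : ∀ i, 0 ≤ f i) {P Q : ι → Prop} {R : κ → ι → Prop} [DecidablePred P]
    [DecidablePred Q] [∀ k, DecidablePred (R k)] (hPQR : ∀ i, P i → Q i ∨ ∃ k ∈ t, R k i) :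
    ∑ i ∈ s with P i, f i ≤ ∑ i ∈ s with Q i, f i + ∑ k ∈ t, ∑ i ∈ s with R k i, f i := by
  have hite : ∀ (A : Prop) [Decidable A] i, 0 ≤ if A then f i else 0 := fun A _ i => by
    split_ifs
    exacts [hf i, le_rfl]
  simp only [sum_filter]
  rw [sum_comm (s := t), ← sum_add_distrib]
  refine sum_le_sum fun i _ => ?_
  by_cases hP : P i
  · rw [if_pos hP]
    rcases hPQR i hP with hQ | ⟨k, hk, hR⟩
    · rw [if_pos hQ]
      exact le_add_of_nonneg_right (sum_nonneg fun k _ => hite _ i)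
    · calc f i = if R k i then f i else 0 := (if_pos hR).symm
        _ ≤ ∑ k ∈ t, if R k i then f i else 0 :=
          single_le_sum (f := fun k => if R k i then f i else 0) (fun k _ => hite _ i) hk
        _ ≤ _ := le_add_of_nonneg_left (hite _ i)
  · rw [if_neg hP]
    exact add_nonneg (hite _ i) (sum_nonneg fun k _ => hite _ i)

/-- `badBound β h m` is the constant `δ_{h-m}`, so the recursion runs downwards from `δ_h = β`. -/
noncomputable def badBound (β : ℝ) (h : ℕ) : ℕ → ℝ
  | 0 => β
  | m + 1 => β * (badBound β h m / (2 * h)) ^ h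

section BadBound

variable {β : ℝ} {h : ℕ}

lemma badBound_pos (hβ : 0 < β) (hh : 0 < h) : ∀ m, 0 < badBound β h m
  | 0 => hβ
  | m + 1 => by
    have := badBound_pos hβ hh m
    simp only [badBound]
    positivity

lemma badBound_le (hβ0 : 0 < β) (hβ1 : β ≤ 1) (hh : 0 < h) : ∀ m, badBound β h m ≤ β
  | 0 => le_rfl
  | m + 1 => by
    have hm := badBound_le hβ0 hβ1 hh m
    have hpos := badBound_pos hβ0 hh m
    have h1 : (1 : ℝ) ≤ h := by exact_mod_cast hh
    refine mul_le_of_le_one_right hβ0.le (pow_le_one₀ (by positivity) ?_)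
    rw [div_le_one (by positivity)]
    linarith

lemma badBound_succ_le_half (hβ0 : 0 < β) (hβ1 : β ≤ 1) (hh : 0 < h) (m : ℕ) :
    badBound β h (m + 1) ≤ badBound β h m / 2 := by
  have hpos := badBound_pos hβ0 hh m
  have h1 : (1 : ℝ) ≤ h := by exact_mod_cast hh
  have hy : badBound β h m / (2 * h) ≤ 1 := by
    rw [div_le_one (by positivity)]
    linarith [badBound_le hβ0 hβ1 hh m]
  calc β * (badBound β h m / (2 * h)) ^ h
      ≤ 1 * (badBound β h m / (2 * h)) :=
        mul_le_mul hβ1 (pow_le_of_le_one (by positivity) hy hh.ne') (by positivity) zero_le_one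
    _ ≤ badBound β h m / 2 := by
        rw [one_mul]
        exact div_le_div_of_nonneg_left hpos.le two_pos (by linarith)

lemma badBound_antitone (hβ0 : 0 < β) (hβ1 : β ≤ 1) (hh : 0 < h) : Antitone (badBound β h) :=
  antitone_nat_of_succ_le fun m =>
    (badBound_succ_le_half hβ0 hβ1 hh m).trans (half_le_self (badBound_pos hβ0 hh m).le)

end BadBound

section Goodness

open scoped Classical

variable {V : Type} [Fintype V] (G : SimpleGraph V) {α β p ε : ℝ} {h : ℕ}

lemma sum_pow_filter_card_commNbhd_lt_le (hα : 0 ≤ α) (hp : 0 ≤ p) (ℓ w : ℕ) :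
    ∑ S : Fin ℓ → V with ¬ α * p ^ ℓ * Fintype.card V ≤ Nat.card (commNbhd G S),
        (Nat.card (commNbhd G S) : ℝ) ^ w
      ≤ α ^ w * (Fintype.card V : ℝ) ^ ℓ * (Fintype.card V * p ^ ℓ) ^ w := by
  calc _ ≤ ∑ S : Fin ℓ → V with ¬ α * p ^ ℓ * Fintype.card V ≤ Nat.card (commNbhd G S),
          (α * p ^ ℓ * Fintype.card V) ^ w :=
        sum_le_sum fun S hS =>
          pow_le_pow_left₀ (Nat.cast_nonneg _) (not_le.1 (mem_filter.1 hS).2).le w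
    _ ≤ ∑ _S : Fin ℓ → V, (α * p ^ ℓ * Fintype.card V) ^ w :=
        sum_le_sum_of_subset_of_nonneg (filter_subset _ _) fun _ _ _ => by positivity
    _ = _ := by
        rw [sum_const, card_univ, Fintype.card_fun, Fintype.card_fin, nsmul_eq_mul]
        push_cast
        ring

lemma exists_of_not_isGood_succ {i ℓ : ℕ} {S : Fin ℓ → V}
    (hS : ¬ IsGood G α β p h (i + 1) ℓ S) :
    ¬ α * p ^ ℓ * Fintype.card V ≤ Nat.card (commNbhd G S) ∨
      ∃ k ∈ Icc ℓ h, β * (Nat.card (commNbhd G S) : ℝ) ^ k <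
        #{T : Fin k → V | (∀ a, T a ∈ commNbhd G S) ∧ ¬ IsGood G α β p h i k T} := by
  by_contra! hgood
  obtain ⟨hthreshold, hbad⟩ := hgood
  refine hS ⟨hthreshold, fun k hℓk hkh => ?_⟩
  have hsplit := card_filter_add_card_filter_not
    (s := {T : Fin k → V | ∀ a, T a ∈ commNbhd G S}) (fun T => IsGood G α β p h i k T)
  rw [filter_filter, filter_filter, card_filter_forall_mem] at hsplit
  rw [Nat.card_eq_fintype_card (α := {T : Fin k → V // _}), Fintype.card_subtype]
  have hcast : ((#{T : Fin k → V | (∀ a, T a ∈ commNbhd G S) ∧ IsGood G α β p h i k T} : ℕ) : ℝ)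
      + #{T : Fin k → V | (∀ a, T a ∈ commNbhd G S) ∧ ¬ IsGood G α β p h i k T}
      = (Nat.card (commNbhd G S) : ℝ) ^ k := by
    exact_mod_cast hsplit
  linarith [hbad k (mem_Icc.2 ⟨hℓk, hkh⟩)]

lemma sum_pow_filter_many_extensions_le (hβ : 0 < β) (hε : 0 ≤ ε) (hp : 0 ≤ p)
    {ℓ k w : ℕ} (hw : 0 < w) (hwk : w ≤ k) (P : (Fin k → V) → Prop) [DecidablePred P]
    (hP : ∑ T : Fin k → V with P T, (Nat.card (commNbhd G T) : ℝ) ^ ℓ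
      ≤ β * ε ^ k * (Fintype.card V : ℝ) ^ k * (Fintype.card V * p ^ k) ^ ℓ) :
    ∑ S : Fin ℓ → V with β * (Nat.card (commNbhd G S) : ℝ) ^ k <
          #{T : Fin k → V | (∀ a, T a ∈ commNbhd G S) ∧ P T},
        (Nat.card (commNbhd G S) : ℝ) ^ w
      ≤ ε ^ w * (Fintype.card V : ℝ) ^ ℓ * (Fintype.card V * p ^ ℓ) ^ w := by
  set F : Finset (Fin ℓ → V) := {S | β * (Nat.card (commNbhd G S) : ℝ) ^ k <
    #{T : Fin k → V | (∀ a, T a ∈ commNbhd G S) ∧ P T}}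
  have hF : (#F : ℝ) ≤ (Fintype.card V : ℝ) ^ ℓ := by
    exact_mod_cast (card_le_univ F).trans_eq (by simp)
  refine sum_pow_le_of_sum_pow_le (fun S => Nat.cast_nonneg _) hF (by positivity) hε hw hwk ?_
  refine le_of_mul_le_mul_left ?_ hβ
  calc β * ∑ S ∈ F, (Nat.card (commNbhd G S) : ℝ) ^ k
      = ∑ S ∈ F, β * (Nat.card (commNbhd G S) : ℝ) ^ k := mul_sum _ _ _
    _ ≤ ∑ S ∈ F, (#{T : Fin k → V | (∀ a, T a ∈ commNbhd G S) ∧ P T} : ℝ) :=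
        sum_le_sum fun S hS => (mem_filter.1 hS).2.le
    _ ≤ ∑ S : Fin ℓ → V, (#{T : Fin k → V | (∀ a, T a ∈ commNbhd G S) ∧ P T} : ℝ) :=
        sum_le_sum_of_subset_of_nonneg (filter_subset _ _) fun _ _ _ => Nat.cast_nonneg _
    _ = ∑ T : Fin k → V with P T, (Nat.card (commNbhd G T) : ℝ) ^ ℓ := by
        exact_mod_cast sum_card_filter_forall_mem_commNbhd G P
    _ ≤ _ := hP
    _ = _ := by ring

lemma sum_not_isGood_succ_pow_le (hβ : 0 < β) (hε0 : 0 ≤ ε) (hε1 : ε ≤ 1) (hα : 0 ≤ α)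
    (hp : 0 ≤ p) {i ℓ w : ℕ} (hw : 0 < w) (hwℓ : w ≤ ℓ)
    (hbad : ∀ k, ℓ ≤ k → k ≤ h → ∑ T : Fin k → V with ¬ IsGood G α β p h i k T,
      (Nat.card (commNbhd G T) : ℝ) ^ ℓ
        ≤ β * ε ^ h * (Fintype.card V : ℝ) ^ k * (Fintype.card V * p ^ k) ^ ℓ) :
    ∑ S : Fin ℓ → V with ¬ IsGood G α β p h (i + 1) ℓ S, (Nat.card (commNbhd G S) : ℝ) ^ w
      ≤ (α ^ w + h * ε) * (Fintype.card V : ℝ) ^ ℓ * (Fintype.card V * p ^ ℓ) ^ w := by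
  set X := (Fintype.card V : ℝ) ^ ℓ * (Fintype.card V * p ^ ℓ) ^ w
  calc _ ≤ ∑ S : Fin ℓ → V with ¬ α * p ^ ℓ * Fintype.card V ≤ Nat.card (commNbhd G S),
          (Nat.card (commNbhd G S) : ℝ) ^ w
        + ∑ k ∈ Icc ℓ h, ∑ S : Fin ℓ → V with β * (Nat.card (commNbhd G S) : ℝ) ^ k <
          #{T : Fin k → V | (∀ a, T a ∈ commNbhd G S) ∧ ¬ IsGood G α β p h i k T},
          (Nat.card (commNbhd G S) : ℝ) ^ w :=
        sum_filter_le_sum_filter_add_sum_sum_filter _ _ (fun S => by positivity)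
          fun S => exists_of_not_isGood_succ G
    _ ≤ α ^ w * X + ∑ _k ∈ Icc ℓ h, ε * X := by
        rw [← mul_assoc]
        refine add_le_add (sum_pow_filter_card_commNbhd_lt_le G hα hp ℓ w)
          (sum_le_sum fun k hk => ?_)
        obtain ⟨hℓk, hkh⟩ := mem_Icc.1 hk
        refine (sum_pow_filter_many_extensions_le G hβ hε0 hp hw (hwℓ.trans hℓk) _
          ((hbad k hℓk hkh).trans ?_)).trans ?_
        · gcongr β * ?_ * _ * _
          exact pow_le_pow_of_le_one hε0 hε1 hkh
        · rw [mul_assoc]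
          gcongr
          exact pow_le_of_le_one hε0 hε1 hw.ne'
    _ ≤ (α ^ w + h * ε) * X := by
        have hIcc : ((Icc ℓ h).card : ℝ) ≤ h := by
          rw [Nat.card_Icc]
          exact_mod_cast (by omega : h + 1 - ℓ ≤ h)
        rw [sum_const, nsmul_eq_mul, add_mul, mul_assoc (h : ℝ)]
        gcongr
    _ = _ := by ring

lemma isGood_density_zero (hβ : 0 ≤ β) :
    ∀ (i : ℕ) {k : ℕ}, 0 < k → ∀ T : Fin k → V, IsGood G α β 0 h i k T
  | 0, k, hk, T => by simp [IsGood, zero_pow hk.ne']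
  | i + 1, k, hk, T => by
    refine ⟨by simp [zero_pow hk.ne'], fun m hkm _ => ?_⟩
    have hall : Nat.card {T' : Fin m → V // (∀ a, T' a ∈ commNbhd G T) ∧ IsGood G α β 0 h i m T'}
        = #{T' : Fin m → V | ∀ a, T' a ∈ commNbhd G T} := by
      rw [Nat.card_eq_fintype_card, Fintype.card_subtype]
      congr 1
      exact filter_congr fun T' _ =>
        and_iff_left (isGood_density_zero hβ i (hk.trans_le hkm) T')
    rw [hall, card_filter_forall_mem]
    push_cast
    exact mul_le_of_le_one_left (by positivity) (by linarith)

lemma sum_not_isGood_pow_le (hβ0 : 0 < β) (hβ1 : β ≤ 1) (hh : 0 < h) (hα0 : 0 ≤ α)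
    (hα : α ≤ badBound β h h / 2) (hp : 0 ≤ p) {i : ℕ} (hi : i ≤ h) {ℓ w : ℕ} (hw : 0 < w)
    (hwℓ : w ≤ ℓ) (hℓh : ℓ ≤ h) :
    ∑ S : Fin ℓ → V with ¬ IsGood G α β p h i ℓ S, (Nat.card (commNbhd G S) : ℝ) ^ w
      ≤ badBound β h (h - i) * (Fintype.card V : ℝ) ^ ℓ * (Fintype.card V * p ^ ℓ) ^ w := by
  have hα_le : ∀ m ≤ h, α ≤ badBound β h m / 2 := fun m hm =>
    hα.trans (by gcongr; exact badBound_antitone hβ0 hβ1 hh hm)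
  have hα1 : α ≤ 1 := by linarith [hα_le h le_rfl, badBound_le hβ0 hβ1 hh h]
  induction i generalizing ℓ w with
  | zero =>
    refine (sum_pow_filter_card_commNbhd_lt_le G hα0 hp ℓ w).trans ?_
    gcongr
    calc α ^ w ≤ α := pow_le_of_le_one hα0 hα1 hw.ne'
      _ ≤ badBound β h (h - 0) := by
          rw [Nat.sub_zero]
          linarith [hα_le h le_rfl, badBound_pos hβ0 hh h]
  | succ i ih =>
    set d := badBound β h (h - (i + 1))
    have hd := badBound_pos hβ0 hh (h - (i + 1))
    have hh' : (1 : ℝ) ≤ h := by exact_mod_cast hh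
    have hrec : badBound β h (h - i) = β * (d / (2 * h)) ^ h := by
      rw [show h - i = h - (i + 1) + 1 by omega]
      rfl
    have hε1 : d / (2 * h) ≤ 1 := by
      rw [div_le_one (by positivity)]
      linarith [badBound_le hβ0 hβ1 hh (h - (i + 1))]
    refine (sum_not_isGood_succ_pow_le G hβ0 (by positivity) hε1 hα0 hp hw hwℓ
      fun k hℓk hkh => ?_).trans ?_
    · rw [← hrec]
      exact ih (by omega) (hw.trans_le hwℓ) hℓk hkh
    · gcongr
      calc α ^ w + h * (d / (2 * h)) ≤ α + d / 2 := by
            gcongr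
            · exact pow_le_of_le_one hα0 hα1 hw.ne'
            · exact le_of_eq (by field_simp)
        _ ≤ d := by linarith [hα_le (h - (i + 1)) (Nat.sub_le _ _)]

lemma one_sub_mul_le_sum_isGood (hβ0 : 0 < β) (hβ1 : β ≤ 1) (hh : 0 < h) (hα0 : 0 ≤ α)
    (hα : α ≤ badBound β h h / 2) (hp : 0 ≤ p) {i j : ℕ} (hi : i ≤ h) (hj : 0 < j) (hjh : j ≤ h)
    (htotal : (Fintype.card V : ℝ) ^ (j + 1) * p ^ j
      ≤ ∑ S : Fin j → V, (Nat.card (commNbhd G S) : ℝ)) :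
    (1 - β) * (Fintype.card V : ℝ) ^ (j + 1) * p ^ j
      ≤ ∑ S : Fin j → V with IsGood G α β p h i j S, (Nat.card (commNbhd G S) : ℝ) := by
  have hbad := sum_not_isGood_pow_le G hβ0 hβ1 hh hα0 hα hp hi one_pos hj hjh
  have hδ := badBound_le hβ0 hβ1 hh (h - i)
  rw [← sum_filter_add_sum_filter_not univ (IsGood G α β p h i j)] at htotal
  simp only [pow_one] at hbad
  have hbad_le : badBound β h (h - i) * (Fintype.card V : ℝ) ^ j * (Fintype.card V * p ^ j)
      ≤ β * ((Fintype.card V : ℝ) ^ (j + 1) * p ^ j) :=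
    calc _ = badBound β h (h - i) * ((Fintype.card V : ℝ) ^ (j + 1) * p ^ j) := by ring
      _ ≤ _ := by gcongr
  linarith

lemma exists_isGood_le_card_commNbhd [Nonempty V] (hβ0 : 0 ≤ β) (hβ1 : β < 1) (hp : 0 ≤ p)
    {i j : ℕ} (hj : 0 < j)
    (hgood : (1 - β) * (Fintype.card V : ℝ) ^ (j + 1) * p ^ j
      ≤ ∑ S : Fin j → V with IsGood G α β p h i j S, (Nat.card (commNbhd G S) : ℝ)) :
    ∃ S : Fin j → V, IsGood G α β p h i j S ∧
      (1 - β) * p ^ j * Fintype.card V ≤ Nat.card (commNbhd G S) := by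
  rcases hp.eq_or_lt with rfl | hp
  · exact ⟨fun _ => Classical.arbitrary V, isGood_density_zero G hβ0 i hj _,
      by simp [zero_pow hj.ne']⟩
  have hpos : 0 < (1 - β) * p ^ j * Fintype.card V := by
    have := sub_pos.2 hβ1
    positivity
  have hconst : ∑ _S : Fin j → V, (1 - β) * p ^ j * Fintype.card V
      = (1 - β) * (Fintype.card V : ℝ) ^ (j + 1) * p ^ j := by
    rw [sum_const, card_univ, Fintype.card_fun, Fintype.card_fin, nsmul_eq_mul]
    push_cast
    ring
  rw [sum_filter, ← hconst] at hgood
  obtain ⟨S, -, hS⟩ := exists_le_of_sum_le univ_nonempty hgood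
  by_cases hS_good : IsGood G α β p h i j S
  · exact ⟨S, hS_good, by simpa [hS_good] using hS⟩
  · simp only [hS_good, if_false] at hS
    linarith

end Goodness

open scoped Classical in
/-- **Theorem 3.3.** (Nested goodness lemma for `r = 1`.) For `h ≥ 1` and `0 < β < 1`
there is `α > 0` such that for every graph `G` on `n` vertices with `p = 2e(G)/n²`,
for all `i, j ∈ [h]`, the sum of `|N(S)|` over `i`-good length-`j` sequences is at
least `(1-β) n^{j+1} p^j`; in particular some `i`-good sequence `S` of length `j`
has `|N(S)| ≥ (1-β) p^j n`. -/
theorem nested_goodness_one (h : ℕ) (hh : 1 ≤ h) (β : ℝ) (hβ0 : 0 < β) (hβ1 : β < 1) :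
    ∃ α : ℝ, 0 < α ∧
      ∀ (V : Type) [Fintype V] [Nonempty V] (G : SimpleGraph V),
        ∀ i j : ℕ, 1 ≤ i → i ≤ h → 1 ≤ j → j ≤ h →
          let p : ℝ := 2 * (Nat.card G.edgeSet : ℝ) / (Fintype.card V : ℝ) ^ 2
          ((1 - β) * (Fintype.card V : ℝ) ^ (j + 1) * p ^ j ≤
            ∑ S : Fin j → V,
              (if IsGood G α β p h i j S then (Nat.card (commNbhd G S) : ℝ) else 0)) ∧
          ∃ S : Fin j → V, IsGood G α β p h i j S ∧
            (1 - β) * p ^ j * (Fintype.card V : ℝ) ≤ (Nat.card (commNbhd G S) : ℝ) := by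
  have hα := half_pos (badBound_pos hβ0 hh h)
  refine ⟨badBound β h h / 2, hα, ?_⟩
  intro V _ _ G i j _ hih hj hjh p
  have hp : 0 ≤ p := by positivity
  have hgood := one_sub_mul_le_sum_isGood G hβ0 hβ1.le hh hα.le le_rfl hp hih hj hjh
    (card_pow_mul_density_pow_le_sum_card_commNbhd G hj)
  rw [← sum_filter]
  exact ⟨hgood, exists_isGood_le_card_commNbhd G hβ0.le hβ1 hp hj hgood⟩
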